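/- arXiv:2605.15678 — 2 statements merged into one kernel-verified Lean document; each statement's English description precedes it below -/
import Mathlib

section
/- Let n ≥ 2, 1 ≤ k < h ≤ n, y ∈ F, and set Y = y(E_{n+1-h,k} - E_{n+1-k,h}) ∈ Mat_n(F). Let X ∈ Mat_n(F) be written as X = Σ_{1≤i<j≤n} x_{i,j}(E_{i,n+1-j} - E_{j,n+1-i}), and assume x_{k,h} = 0. Then YXY = 0. -/
/-! Since `E_{a,b} X E_{c,d} = X_{b,c} E_{a,d}`, the product `YXY` only involves the entries
`X_{k,h'}, X_{k,k'}, X_{h,h'}, X_{h,k'}` (with `i' = n+1-i`), which are `x_{k,h}`, `0`, `0`, `-x_{k,h}`. -/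

open Matrix

lemma sum_smul_single_sub_single_rev_apply_rev {R : Type*} [Ring R] {n : ℕ}
    (x : Fin n → Fin n → R) (a b : Fin n) :
    (∑ i : Fin n, ∑ j : Fin n,
      if i < j then x i j • (single i j.rev 1 - single j i.rev 1) else 0 :
        Matrix (Fin n) (Fin n) R) a b.rev
      = (if a < b then x a b else 0) - (if b < a then x b a else 0) := by
  simp only [Matrix.sum_apply, apply_ite (fun M : Matrix (Fin n) (Fin n) R => M a b.rev),
    Matrix.smul_apply, Matrix.sub_apply, Matrix.zero_apply, single_apply, Fin.rev_inj,
    smul_eq_mul, mul_sub, mul_ite, mul_one, mul_zero]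
  have summand : ∀ i j : Fin n,
      (if i < j then (if i = a ∧ j = b then x i j else 0) - if j = a ∧ i = b then x i j else 0
        else 0) =
      (if i = a then if j = b then if a < b then x a b else 0 else 0 else 0) -
        (if i = b then if j = a then if b < a then x b a else 0 else 0 else 0) := by
    intro i j
    by_cases hij : i < j <;> grind
  simp only [summand, Finset.sum_sub_distrib, Finset.sum_ite_irrel, Finset.sum_ite_eq',
    Finset.mem_univ, if_true, Finset.sum_const_zero]

theorem stmt1_general {F : Type*} [Field F] {n : ℕ}
    (k h : Fin n) (hkh : k < h) (y : F) (x : Fin n → Fin n → F)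
    (Y X : Matrix (Fin n) (Fin n) F)
    (hY : Y = y • (Matrix.single h.rev k 1 - Matrix.single k.rev h 1))
    (hX : X = ∑ i : Fin n, ∑ j : Fin n,
      if i < j then
        x i j • (Matrix.single i j.rev 1 - Matrix.single j i.rev 1)
      else 0)
    (hx : x k h = 0) :
    Y * X * Y = 0 := by
  have hX_rev : ∀ a b, X a b.rev = (if a < b then x a b else 0) - (if b < a then x b a else 0) :=
    fun a b => hX ▸ sum_smul_single_sub_single_rev_apply_rev x a b
  obtain ⟨hXkh, hXkk, hXhh, hXhk⟩ :
      X k h.rev = 0 ∧ X k k.rev = 0 ∧ X h h.rev = 0 ∧ X h k.rev = 0 := by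
    simp only [hX_rev, hkh, hkh.not_gt, lt_irrefl, hx, if_true, if_false, sub_self, and_self]
  subst hY
  simp only [Matrix.smul_mul, Matrix.mul_smul, Matrix.sub_mul, Matrix.mul_sub,
    single_mul_mul_single, hXkh, hXkk, hXhh, hXhk]
  simp only [mul_zero, zero_mul, single_zero, sub_self, smul_zero]

/-- If `Y = y (E_{n+1-h,k} - E_{n+1-k,h})` and `X = Σ_{i<j} x_{i,j}(E_{i,n+1-j} - E_{j,n+1-i})`
with `x_{k,h} = 0`, then `YXY = 0`. -/
theorem stmt1 {F : Type*} [Field F] {n : ℕ} (hn : 2 ≤ n)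
    (k h : Fin n) (hkh : k < h) (y : F) (x : Fin n → Fin n → F)
    (Y X : Matrix (Fin n) (Fin n) F)
    (hY : Y = y • (Matrix.single h.rev k 1 - Matrix.single k.rev h 1))
    (hX : X = ∑ i : Fin n, ∑ j : Fin n,
      if i < j then
        x i j • (Matrix.single i j.rev 1 - Matrix.single j i.rev 1)
      else 0)
    (hx : x k h = 0) :
    Y * X * Y = 0 :=
  stmt1_general k h hkh y x Y X hY hX hx
end

section
/- Let S₀ ⊆ {1,…,r} and S₁ ⊆ {r+1,…,n}, S = S₀ ∪ S₁. With I_S^+ = {(i,j) : 1≤i<j≤n, i∉S, j∉S} and I_S^- = {(i,j) : 1≤i<j≤n, i∉S, j∈S}, the count |I_S^+ \ I_{S₁}^+| + |I_S^- \ (I_{S₀}^- ∪ I_{S₁}^-)| equals ½(r−|S₀|)(2n−r−|S₀|−1), where I_{S₀}^± is computed inside {1,…,r} and I_{S₁}^± inside {r+1,…,n}. -/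
lemma aux_lt_card (s : Finset ℕ) :
    2 * ((s ×ˢ s).filter fun p => p.1 < p.2).card = s.card * (s.card - 1) := by
  have hunion : ((s ×ˢ s).filter fun p => p.1 < p.2) ∪ ((s ×ˢ s).filter fun p => p.2 < p.1)
      = s.offDiag := by
    ext ⟨a, b⟩
    simp only [Finset.mem_union, Finset.mem_filter, Finset.mem_product, Finset.mem_offDiag]
    constructor
    · rintro (⟨⟨ha, hb⟩, h⟩ | ⟨⟨ha, hb⟩, h⟩) <;> exact ⟨ha, hb, by omega⟩
    · rintro ⟨ha, hb, h⟩
      rcases lt_or_gt_of_ne h with h' | h'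
      · exact Or.inl ⟨⟨ha, hb⟩, h'⟩
      · exact Or.inr ⟨⟨ha, hb⟩, h'⟩
  have hdisj : Disjoint ((s ×ˢ s).filter fun p => p.1 < p.2)
      ((s ×ˢ s).filter fun p => p.2 < p.1) := by
    rw [Finset.disjoint_left]
    rintro ⟨a, b⟩ h1 h2
    simp only [Finset.mem_filter] at h1 h2
    omega
  have hcardeq : ((s ×ˢ s).filter fun p => p.1 < p.2).card
      = ((s ×ˢ s).filter fun p => p.2 < p.1).card := by
    apply Finset.card_bij (fun p _ => p.swap)
    · rintro ⟨a, b⟩ h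
      simp only [Finset.mem_filter, Finset.mem_product] at h ⊢
      exact ⟨⟨h.1.2, h.1.1⟩, h.2⟩
    · rintro ⟨a, b⟩ _ ⟨c, d⟩ _ h
      have := (Prod.ext_iff.mp h)
      simp only [Prod.swap] at this
      exact Prod.ext_iff.mpr ⟨this.2, this.1⟩
    · rintro ⟨a, b⟩ h
      refine ⟨(b, a), ?_, rfl⟩
      simp only [Finset.mem_filter, Finset.mem_product] at h ⊢
      exact ⟨⟨h.1.2, h.1.1⟩, h.2⟩
  have := Finset.card_union_of_disjoint hdisj
  rw [hunion, Finset.offDiag_card] at this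
  have hc : s.card * (s.card - 1) = s.card * s.card - s.card := by
    cases s.card with
    | zero => simp
    | succ m =>
      have : (m + 1) * (m + 1) = (m + 1) * m + (m + 1) := by ring
      simp [this]
  omega

lemma aux_eqP (n r : ℕ) (hrn : r ≤ n)
    (S0 S1 : Finset ℕ) (hS0 : S0 ⊆ Finset.Icc 1 r) (hS1 : S1 ⊆ Finset.Icc (r + 1) n) :
    ((Finset.Icc 1 n ×ˢ Finset.Icc 1 n).filter
        (fun p => p.1 < p.2 ∧ p.1 ∉ S0 ∪ S1 ∧ p.2 ∉ S0 ∪ S1)) \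
      ((Finset.Icc (r+1) n ×ˢ Finset.Icc (r+1) n).filter
        (fun p => p.1 < p.2 ∧ p.1 ∉ S1 ∧ p.2 ∉ S1))
    = (((Finset.Icc 1 r \ S0) ×ˢ (Finset.Icc 1 r \ S0)).filter fun p => p.1 < p.2)
      ∪ (Finset.Icc 1 r \ S0) ×ˢ (Finset.Icc (r+1) n \ S1) := by
  ext ⟨i, j⟩
  have hi0 := fun h : i ∈ S0 => Finset.mem_Icc.mp (hS0 h)
  have hj0 := fun h : j ∈ S0 => Finset.mem_Icc.mp (hS0 h)
  have hi1 := fun h : i ∈ S1 => Finset.mem_Icc.mp (hS1 h)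
  have hj1 := fun h : j ∈ S1 => Finset.mem_Icc.mp (hS1 h)
  simp only [Finset.mem_sdiff, Finset.mem_filter, Finset.mem_product, Finset.mem_Icc,
    Finset.mem_union, not_and, not_or]
  by_cases hm0 : i ∈ S0 <;> by_cases hm1 : i ∈ S1 <;> by_cases hm2 : j ∈ S0 <;>
    by_cases hm3 : j ∈ S1 <;> simp_all <;> omega

lemma aux_eqM (n r : ℕ) (hrn : r ≤ n)
    (S0 S1 : Finset ℕ) (hS0 : S0 ⊆ Finset.Icc 1 r) (hS1 : S1 ⊆ Finset.Icc (r + 1) n) :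
    ((Finset.Icc 1 n ×ˢ Finset.Icc 1 n).filter
        (fun p => p.1 < p.2 ∧ p.1 ∉ S0 ∪ S1 ∧ p.2 ∈ S0 ∪ S1)) \
      (((Finset.Icc 1 r ×ˢ Finset.Icc 1 r).filter
          (fun p => p.1 < p.2 ∧ p.1 ∉ S0 ∧ p.2 ∈ S0))
        ∪ ((Finset.Icc (r+1) n ×ˢ Finset.Icc (r+1) n).filter
          (fun p => p.1 < p.2 ∧ p.1 ∉ S1 ∧ p.2 ∈ S1)))
    = (Finset.Icc 1 r \ S0) ×ˢ S1 := by
  ext ⟨i, j⟩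
  have hi0 := fun h : i ∈ S0 => Finset.mem_Icc.mp (hS0 h)
  have hj0 := fun h : j ∈ S0 => Finset.mem_Icc.mp (hS0 h)
  have hi1 := fun h : i ∈ S1 => Finset.mem_Icc.mp (hS1 h)
  have hj1 := fun h : j ∈ S1 => Finset.mem_Icc.mp (hS1 h)
  simp only [Finset.mem_sdiff, Finset.mem_filter, Finset.mem_product, Finset.mem_Icc,
    Finset.mem_union, not_and, not_or]
  by_cases hm0 : i ∈ S0 <;> by_cases hm1 : i ∈ S1 <;> by_cases hm2 : j ∈ S0 <;>
    by_cases hm3 : j ∈ S1 <;> simp_all <;> omega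

/-- Root count (E:no of roots):
`|I_S^+ \ I_{S₁}^+| + |I_S^- \ (I_{S₀}^- ∪ I_{S₁}^-)| = ½(r-|S₀|)(2n-r-|S₀|-1)`. -/
theorem stmt16 (n r : ℕ) (hr : 1 ≤ r) (hrn : r ≤ n)
    (S0 S1 : Finset ℕ) (hS0 : S0 ⊆ Finset.Icc 1 r) (hS1 : S1 ⊆ Finset.Icc (r + 1) n) :
    let S := S0 ∪ S1
    let pairs := (Finset.Icc 1 n) ×ˢ (Finset.Icc 1 n)
    let ISp := pairs.filter fun p => p.1 < p.2 ∧ p.1 ∉ S ∧ p.2 ∉ S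
    let ISm := pairs.filter fun p => p.1 < p.2 ∧ p.1 ∉ S ∧ p.2 ∈ S
    let IS1p := ((Finset.Icc (r + 1) n) ×ˢ (Finset.Icc (r + 1) n)).filter
        fun p => p.1 < p.2 ∧ p.1 ∉ S1 ∧ p.2 ∉ S1
    let IS0m := ((Finset.Icc 1 r) ×ˢ (Finset.Icc 1 r)).filter
        fun p => p.1 < p.2 ∧ p.1 ∉ S0 ∧ p.2 ∈ S0
    let IS1m := ((Finset.Icc (r + 1) n) ×ˢ (Finset.Icc (r + 1) n)).filter
        fun p => p.1 < p.2 ∧ p.1 ∉ S1 ∧ p.2 ∈ S1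
    2 * ((ISp \ IS1p).card + (ISm \ (IS0m ∪ IS1m)).card) =
      (r - S0.card) * (2 * n - r - S0.card - 1) := by
  intro S pairs ISp ISm IS1p IS0m IS1m
  have e1 : ISp \ IS1p
      = (((Finset.Icc 1 r \ S0) ×ˢ (Finset.Icc 1 r \ S0)).filter fun p => p.1 < p.2)
        ∪ (Finset.Icc 1 r \ S0) ×ˢ (Finset.Icc (r+1) n \ S1) :=
    aux_eqP n r hrn S0 S1 hS0 hS1
  have e2 : ISm \ (IS0m ∪ IS1m) = (Finset.Icc 1 r \ S0) ×ˢ S1 :=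
    aux_eqM n r hrn S0 S1 hS0 hS1
  rw [e1, e2]
  set A : Finset ℕ := Finset.Icc 1 r \ S0 with hA
  have hdisj : Disjoint ((A ×ˢ A).filter fun p => p.1 < p.2)
      (A ×ˢ (Finset.Icc (r+1) n \ S1)) := by
    rw [Finset.disjoint_left]
    rintro ⟨i, j⟩ hq hw
    simp only [hA, Finset.mem_filter, Finset.mem_product, Finset.mem_sdiff,
      Finset.mem_Icc] at hq hw
    omega
  rw [Finset.card_union_of_disjoint hdisj, Finset.card_product, Finset.card_product]
  have key := aux_lt_card A
  have hcardA : A.card = r - S0.card := by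
    rw [hA, Finset.card_sdiff_of_subset hS0, Nat.card_Icc]; omega
  have hcardB : (Finset.Icc (r+1) n \ S1).card = n - r - S1.card := by
    rw [Finset.card_sdiff_of_subset hS1, Nat.card_Icc]
    omega
  have haler : S0.card ≤ r := by
    calc S0.card ≤ (Finset.Icc 1 r).card := Finset.card_le_card hS0
    _ = r := by rw [Nat.card_Icc]; omega
  have hblenr : S1.card ≤ n - r := by
    calc S1.card ≤ (Finset.Icc (r + 1) n).card := Finset.card_le_card hS1
    _ = n - r := by rw [Nat.card_Icc]; omega
  rw [hcardA, hcardB]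
  set a := S0.card with ha
  set b := S1.card with hb
  set x := ((A ×ˢ A).filter fun p => p.1 < p.2).card with hx
  -- key : 2 * x = (r - a) * (r - a - 1)
  rw [hcardA] at key
  cases hk : r - a with
  | zero =>
    rw [hk] at key
    simp only [Nat.zero_mul] at key ⊢
    omega
  | succ m =>
    have key' : 2 * x = (m + 1) * m := by
      rw [hk] at key
      simpa using key
    have h2 : 2 * n - r - a - 1 = m + 2 * (n - r) := by omega
    have hb' : n - r - b + b = n - r := by omega
    rw [h2]
    have expand : (m + 1) * (m + 2 * (n - r))
        = (m + 1) * m + 2 * ((m + 1) * (n - r - b) + (m + 1) * b) := by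
      rw [← Nat.mul_add, hb']
      ring
    rw [expand]
    linarith [key']
end
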